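/- arXiv:2109.06584 — 2 statements merged into one kernel-verified Lean document; each statement's English description precedes it below -/
import Mathlib

section
/- One-step drift of the single-bit-flip non-elitist algorithm on DLB: Let n be an even positive integer. For every x ∈ {0,1}^n with x ≠ (1,…,1), let x' be the random state obtained as follows: choose i ∈ [1..n] uniformly at random and let y be x with bit i flipped; set x' = y if either (DLB(x) is even and DLB(y) > DLB(x)) or (DLB(x) is odd and DLB(y) > DLB(x) − 2), and set x' = x otherwise. Then E[HLB_{3/2}(x') − HLB_{3/2}(x)] ≥ 1/n. -/
/-- Number of leading ones among positions `0, …, n-1` of `x : ℕ → Bool`. -/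
def LOn (n : ℕ) (x : ℕ → Bool) : ℕ :=
  ((Finset.range n).filter (fun r => ∀ s ≤ r, x s = true)).card

/-- The DeceivingLeadingBlocks function (0-based encoding of bit positions):
blocks are `(x (2ℓ), x (2ℓ+1))`; if `x` is not the all-ones string and `m` is the
index of the first non-`11` block, then the value is `2m+1` for a `00` critical
block, `2m` for a `01`/`10` critical block, and `n` for the all-ones string. -/
def DLBn (n : ℕ) (x : ℕ → Bool) : ℕ :=
  if ∀ i < n, x i = true then n
  else if x (2 * (LOn n x / 2)) = false ∧ x (2 * (LOn n x / 2) + 1) = false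
    then 2 * (LOn n x / 2) + 1
    else 2 * (LOn n x / 2)

/-- The Honest Leading Blocks function with parameter `δ`:
`HLB_δ(x) = 2m` if `DLB(x) = 2m+1`, `HLB_δ(x) = 2m+2-δ` if `DLB(x) = 2m` (for
`m ∈ [0..n/2-1]`), and `HLB_δ(x) = n` if `DLB(x) = n`. -/
noncomputable def HLBn (n : ℕ) (δ : ℝ) (x : ℕ → Bool) : ℝ :=
  if ∀ i < n, x i = true then (n : ℝ)
  else if x (2 * (LOn n x / 2)) = false ∧ x (2 * (LOn n x / 2) + 1) = false
    then (2 * (LOn n x / 2) : ℕ)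
    else (2 * (LOn n x / 2) : ℕ) + 2 - δ

/-- Extend a bit string `x : Fin n → Bool` to all of `ℕ` (by `false` outside). -/
def toNatFun {n : ℕ} (x : Fin n → Bool) : ℕ → Bool :=
  fun i => if h : i < n then x ⟨i, h⟩ else false

/-- The LeadingOnes value of a bit string of length `n`. -/
def LO {n : ℕ} (x : Fin n → Bool) : ℕ := LOn n (toNatFun x)

/-- The DeceivingLeadingBlocks value of a bit string of length `n`. -/
def DLB {n : ℕ} (x : Fin n → Bool) : ℕ := DLBn n (toNatFun x)

/-- The Honest Leading Blocks value (parameter `δ`) of a bit string of length `n`. -/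
noncomputable def HLB {n : ℕ} (δ : ℝ) (x : Fin n → Bool) : ℝ := HLBn n δ (toNatFun x)

/-- One step of the single-bit-flip non-elitist algorithm on `DLB`, started at
`x`: choose a position `i` uniformly at random and let `y` be `x` with bit `i`
flipped; move to `y` if either `DLB x` is even and `DLB y > DLB x`, or `DLB x`
is odd and `DLB y > DLB x - 2`; stay at `x` otherwise. -/
noncomputable def sbfStep (n : ℕ) [NeZero n] (x : Fin n → Bool) :
    PMF (Fin n → Bool) :=
  (PMF.uniformOfFintype (Fin n)).map fun i =>
    if (Even (DLB x) ∧ DLB x < DLB (Function.update x i (!(x i)))) ∨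
        (¬ Even (DLB x) ∧
          (DLB x : ℤ) - 2 < (DLB (Function.update x i (!(x i))) : ℤ))
      then Function.update x i (!(x i)) else x

/-!
Let `m` be the critical block of `x`. Flipping a bit in one of the complete blocks before it
drops `DLB` to at most `2m - 1`, so the move is rejected; flipping a bit after it changes
neither `DLB` nor `HLB`. Only the two bits of the critical block matter. From `00`, both flips
are accepted and each gains `2 - δ`. From `01` or `10`, flipping the zero completes the block
and gains at least `δ`, while flipping the one is accepted (`DLB` rises from `2m` to `2m + 1`)
and gains `δ - 2`. With `δ = 3/2` the two bits contribute at least `1` in every case, and each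
bit is proposed with probability `1/n`.
-/

open Finset Function

lemma LOn_eq_of_prefix {n k : ℕ} {X : ℕ → Bool} (hk : k ≤ n) (hpre : ∀ i < k, X i = true)
    (hXk : k < n → X k = false) : LOn n X = k := by
  rw [LOn, ← card_range k]
  congr 1
  ext r
  simp only [mem_filter, mem_range]
  constructor
  · rintro ⟨hrn, hall⟩
    by_contra! hkr
    simpa [hXk (hkr.trans_lt hrn)] using hall k hkr
  · exact fun hrk => ⟨hrk.trans_le hk, fun s hs => hpre s (hs.trans_lt hrk)⟩

lemma le_LOn_of_prefix {n k : ℕ} {X : ℕ → Bool} (hk : k ≤ n) (hpre : ∀ i < k, X i = true) :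
    k ≤ LOn n X :=
  calc k = #(range k) := (card_range k).symm
    _ ≤ LOn n X := card_le_card fun _ hr => mem_filter.2
      ⟨mem_range.2 ((mem_range.1 hr).trans_le hk),
        fun s hs => hpre s (hs.trans_lt (mem_range.1 hr))⟩

lemma le_DLBn_of_prefix {n m : ℕ} {X : ℕ → Bool} (hm : 2 * m ≤ n)
    (hpre : ∀ i < 2 * m, X i = true) : 2 * m ≤ DLBn n X := by
  have := le_LOn_of_prefix hm hpre
  unfold DLBn
  split_ifs <;> omega

lemma le_HLBn_of_prefix {n m : ℕ} {δ : ℝ} {X : ℕ → Bool} (hδ : δ ≤ 2) (hm : 2 * m ≤ n)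
    (hpre : ∀ i < 2 * m, X i = true) : ((2 * m : ℕ) : ℝ) ≤ HLBn n δ X := by
  have hLO : 2 * m ≤ 2 * (LOn n X / 2) := by have := le_LOn_of_prefix hm hpre; omega
  unfold HLBn
  split_ifs
  · exact_mod_cast hm
  · exact_mod_cast hLO
  · have : ((2 * m : ℕ) : ℝ) ≤ ((2 * (LOn n X / 2) : ℕ) : ℝ) := by exact_mod_cast hLO
    linarith

/-- The paper's critical block index `m(x)`, with bits and blocks indexed from `0`. -/
structure IsCriticalBlock (n m : ℕ) (X : ℕ → Bool) : Prop where
  add_two_le : 2 * m + 2 ≤ n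
  eq_true_of_lt : ∀ i < 2 * m, X i = true
  not_both_true : X (2 * m) = false ∨ X (2 * m + 1) = false

lemma exists_isCriticalBlock {n : ℕ} {X : ℕ → Bool} (he : Even n)
    (h : ∃ i, i < n ∧ X i = false) : ∃ m, IsCriticalBlock n m X := by
  obtain ⟨hLn, hXL⟩ := Nat.find_spec h
  have hpre : ∀ i < Nat.find h, X i = true := fun i hi => by
    simpa [hi.trans hLn] using Nat.find_min h hi
  refine ⟨Nat.find h / 2, by obtain ⟨t, rfl⟩ := he; omega, fun i hi => hpre i (by omega), ?_⟩
  rcases Nat.even_or_odd' (Nat.find h) with ⟨t, ht | ht⟩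
  · left; rwa [show 2 * (Nat.find h / 2) = Nat.find h by omega]
  · right; rwa [show 2 * (Nat.find h / 2) + 1 = Nat.find h by omega]

lemma eq_block_pair_of_div_two_eq {m j k : ℕ} (hj : j / 2 = m) (hk : k / 2 = m) (hjk : j ≠ k) :
    (j = 2 * m ∧ k = 2 * m + 1) ∨ (j = 2 * m + 1 ∧ k = 2 * m) := by
  omega

/-- The acceptance rule of `sbfStep`. It is reducible so that its `Decidable` instance is the
one elaborated inside `sbfStep`. -/
abbrev Accepts (d d' : ℕ) : Prop := (Even d ∧ d < d') ∨ (¬ Even d ∧ (d : ℤ) - 2 < (d' : ℤ))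

lemma accepts_of_le {m d d' : ℕ} (hd : 2 * m ≤ d) (hd' : d ≤ 2 * m + 1) (hm : 2 * m ≤ d')
    (hne : d' ≠ d) : Accepts d d' := by
  simp only [Accepts, Nat.even_iff]
  omega

lemma not_accepts_of_lt {m d d' : ℕ} (hd : 2 * m ≤ d) (hd' : d ≤ 2 * m + 1) (hm : d' < 2 * m) :
    ¬ Accepts d d' := by
  simp only [Accepts, Nat.even_iff]
  omega

noncomputable def flipGain (n : ℕ) (δ : ℝ) (X : ℕ → Bool) (j : ℕ) : ℝ :=
  if Accepts (DLBn n X) (DLBn n (update X j (!X j)))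
    then HLBn n δ (update X j (!X j)) - HLBn n δ X else 0

namespace IsCriticalBlock

variable {n m j k : ℕ} {X : ℕ → Bool}

lemma LOn_div_two (h : IsCriticalBlock n m X) : LOn n X / 2 = m := by
  have := h.add_two_le
  cases hX : X (2 * m)
  · rw [LOn_eq_of_prefix (by omega) h.eq_true_of_lt fun _ => hX]
    omega
  · have hX1 : X (2 * m + 1) = false := by simpa [hX] using h.not_both_true
    have hpre : ∀ i < 2 * m + 1, X i = true := fun i hi => by
      rcases Nat.lt_succ_iff_lt_or_eq.1 hi with hi | rfl
      exacts [h.eq_true_of_lt i hi, hX]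
    rw [LOn_eq_of_prefix (by omega) hpre fun _ => hX1]
    omega

lemma not_forall_eq_true (h : IsCriticalBlock n m X) : ¬ ∀ i < n, X i = true := fun hall => by
  have := h.add_two_le
  rcases h.not_both_true with h0 | h1
  · simp [hall (2 * m) (by omega)] at h0
  · simp [hall (2 * m + 1) (by omega)] at h1

lemma DLBn_eq (h : IsCriticalBlock n m X) :
    DLBn n X = if X (2 * m) = false ∧ X (2 * m + 1) = false then 2 * m + 1 else 2 * m := by
  rw [DLBn, if_neg h.not_forall_eq_true, h.LOn_div_two]

lemma HLBn_eq (h : IsCriticalBlock n m X) (δ : ℝ) :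
    HLBn n δ X = if X (2 * m) = false ∧ X (2 * m + 1) = false
      then ((2 * m : ℕ) : ℝ) else ((2 * m : ℕ) : ℝ) + 2 - δ := by
  rw [HLBn, if_neg h.not_forall_eq_true, h.LOn_div_two]

lemma two_mul_le_DLBn (h : IsCriticalBlock n m X) : 2 * m ≤ DLBn n X := by
  rw [h.DLBn_eq]; split_ifs <;> omega

lemma DLBn_le (h : IsCriticalBlock n m X) : DLBn n X ≤ 2 * m + 1 := by
  rw [h.DLBn_eq]; split_ifs <;> omega

lemma of_eq_on_block {Y : ℕ → Bool} (h : IsCriticalBlock n m X)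
    (hXY : ∀ i ≤ 2 * m + 1, Y i = X i) : IsCriticalBlock n m Y where
  add_two_le := h.add_two_le
  eq_true_of_lt i hi := (hXY i (by omega)).trans (h.eq_true_of_lt i hi)
  not_both_true := by rw [hXY _ (by omega), hXY _ le_rfl]; exact h.not_both_true

lemma flipGain_eq_zero_of_lt (h : IsCriticalBlock n m X) (hj : j < 2 * m) (δ : ℝ) :
    flipGain n δ X j = 0 := by
  have hY : IsCriticalBlock n (j / 2) (update X j (!X j)) := by
    refine ⟨by have := h.add_two_le; omega, fun i hi => ?_, ?_⟩
    · rw [update_of_ne (by omega)]; exact h.eq_true_of_lt i (by omega)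
    · simp only [update_apply, h.eq_true_of_lt j hj]
      by_cases hev : 2 * (j / 2) = j
      · simp [hev]
      · simp [show 2 * (j / 2) + 1 = j by omega]
  rw [flipGain, if_neg (not_accepts_of_lt h.two_mul_le_DLBn h.DLBn_le
    (by have := hY.DLBn_le; omega))]

lemma flipGain_eq_zero_of_add_two_le (h : IsCriticalBlock n m X) (hj : 2 * m + 2 ≤ j) (δ : ℝ) :
    flipGain n δ X j = 0 := by
  have hXY : ∀ i ≤ 2 * m + 1, update X j (!X j) i = X i := fun i _ => update_of_ne (by omega) _ _
  have hY := h.of_eq_on_block hXY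
  rw [flipGain, hY.HLBn_eq, h.HLBn_eq, hXY _ le_rfl, hXY _ (by omega), sub_self, ite_self]

lemma update_of_pair (h : IsCriticalBlock n m X) (hj : j / 2 = m) (hk : k / 2 = m) (hjk : j ≠ k)
    {b : Bool} (hb : b = false ∨ X k = false) : IsCriticalBlock n m (update X j b) := by
  refine ⟨h.add_two_le, fun i hi => ?_, ?_⟩
  · rw [update_of_ne (by omega)]; exact h.eq_true_of_lt i hi
  · rcases eq_block_pair_of_div_two_eq hj hk hjk with ⟨rfl, rfl⟩ | ⟨rfl, rfl⟩
    · simpa [update_of_ne hjk.symm] using hb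
    · simpa [update_of_ne hjk.symm] using hb.symm

lemma DLBn_eq_of_pair (h : IsCriticalBlock n m X) (hj : j / 2 = m) (hk : k / 2 = m)
    (hjk : j ≠ k) : DLBn n X = if X j = false ∧ X k = false then 2 * m + 1 else 2 * m := by
  rcases eq_block_pair_of_div_two_eq hj hk hjk with ⟨rfl, rfl⟩ | ⟨rfl, rfl⟩ <;>
    simp only [h.DLBn_eq, and_comm]

lemma HLBn_eq_of_pair (h : IsCriticalBlock n m X) (hj : j / 2 = m) (hk : k / 2 = m)
    (hjk : j ≠ k) (δ : ℝ) :
    HLBn n δ X = if X j = false ∧ X k = false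
      then ((2 * m : ℕ) : ℝ) else ((2 * m : ℕ) : ℝ) + 2 - δ := by
  rcases eq_block_pair_of_div_two_eq hj hk hjk with ⟨rfl, rfl⟩ | ⟨rfl, rfl⟩ <;>
    simp only [h.HLBn_eq, and_comm]

lemma flipGain_eq_two_sub_of_eq_false (h : IsCriticalBlock n m X) (hj : j / 2 = m)
    (hk : k / 2 = m) (hjk : j ≠ k) (hXj : X j = false) (hXk : X k = false) (δ : ℝ) :
    flipGain n δ X j = 2 - δ := by
  have hY := h.update_of_pair (b := !X j) hj hk hjk (.inr hXk)
  have hYj : update X j (!X j) j = true := by simp [hXj]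
  have hYk : update X j (!X j) k = false := by rw [update_of_ne hjk.symm, hXk]
  have hDX : DLBn n X = 2 * m + 1 := by rw [h.DLBn_eq_of_pair hj hk hjk, if_pos ⟨hXj, hXk⟩]
  have hDY : DLBn n (update X j (!X j)) = 2 * m := by
    rw [hY.DLBn_eq_of_pair hj hk hjk, if_neg (by rw [hYj]; simp)]
  rw [flipGain, if_pos (accepts_of_le (m := m) (by omega) (by omega) (by omega) (by omega)),
    hY.HLBn_eq_of_pair hj hk hjk, if_neg (by rw [hYj]; simp), h.HLBn_eq_of_pair hj hk hjk,
    if_pos ⟨hXj, hXk⟩]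
  ring

lemma flipGain_eq_sub_two_of_eq_true (h : IsCriticalBlock n m X) (hj : j / 2 = m)
    (hk : k / 2 = m) (hjk : j ≠ k) (hXj : X j = true) (δ : ℝ) :
    flipGain n δ X j = δ - 2 := by
  have hXk : X k = false := by
    rcases eq_block_pair_of_div_two_eq hj hk hjk with ⟨rfl, rfl⟩ | ⟨rfl, rfl⟩ <;>
      simpa [hXj] using h.not_both_true
  have hY := h.update_of_pair (b := !X j) hj hk hjk (.inr hXk)
  have hYj : update X j (!X j) j = false := by simp [hXj]
  have hYk : update X j (!X j) k = false := by rw [update_of_ne hjk.symm, hXk]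
  have hDX : DLBn n X = 2 * m := by rw [h.DLBn_eq_of_pair hj hk hjk, if_neg (by simp [hXj])]
  have hDY : DLBn n (update X j (!X j)) = 2 * m + 1 := by
    rw [hY.DLBn_eq_of_pair hj hk hjk, if_pos ⟨hYj, hYk⟩]
  rw [flipGain, if_pos (accepts_of_le (m := m) (by omega) (by omega) (by omega) (by omega)),
    hY.HLBn_eq_of_pair hj hk hjk, if_pos ⟨hYj, hYk⟩, h.HLBn_eq_of_pair hj hk hjk,
    if_neg (by simp [hXj])]
  ring

lemma le_flipGain_of_eq_false_of_eq_true (h : IsCriticalBlock n m X) (hj : j / 2 = m)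
    (hk : k / 2 = m) (hjk : j ≠ k) (hXj : X j = false) (hXk : X k = true) {δ : ℝ}
    (hδ : δ ≤ 2) : δ ≤ flipGain n δ X j := by
  have hn : 2 * (m + 1) ≤ n := by have := h.add_two_le; omega
  have hY : ∀ i < 2 * (m + 1), update X j (!X j) i = true := fun i hi => by
    rcases eq_or_ne i j with rfl | hij
    · simp [hXj]
    rw [update_of_ne hij]
    rcases eq_or_ne i k with rfl | hik
    · exact hXk
    exact h.eq_true_of_lt i (by omega)
  have hD := le_DLBn_of_prefix hn hY
  rw [flipGain, if_pos (accepts_of_le h.two_mul_le_DLBn h.DLBn_le (by omega)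
    (by have := h.DLBn_le; omega)), h.HLBn_eq_of_pair hj hk hjk, if_neg (by simp [hXk])]
  have := le_HLBn_of_prefix hδ hn hY
  push_cast at this ⊢
  linarith

lemma one_le_flipGain_add (h : IsCriticalBlock n m X) :
    1 ≤ flipGain n (3 / 2) X (2 * m) + flipGain n (3 / 2) X (2 * m + 1) := by
  have h0 : 2 * m / 2 = m := by omega
  have h1 : (2 * m + 1) / 2 = m := by omega
  have hne : 2 * m ≠ 2 * m + 1 := by omega
  cases ha : X (2 * m) <;> cases hb : X (2 * m + 1)
  · rw [h.flipGain_eq_two_sub_of_eq_false h0 h1 hne ha hb,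
      h.flipGain_eq_two_sub_of_eq_false h1 h0 hne.symm hb ha]
    norm_num
  · linarith [h.le_flipGain_of_eq_false_of_eq_true h0 h1 hne ha hb (δ := 3 / 2) (by norm_num),
      h.flipGain_eq_sub_two_of_eq_true h1 h0 hne.symm hb (3 / 2)]
  · linarith [h.le_flipGain_of_eq_false_of_eq_true h1 h0 hne.symm hb ha (δ := 3 / 2) (by norm_num),
      h.flipGain_eq_sub_two_of_eq_true h0 h1 hne ha (3 / 2)]
  · exact absurd h.not_both_true (by simp [ha, hb])

lemma one_le_sum_flipGain (h : IsCriticalBlock n m X) :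
    1 ≤ ∑ j ∈ range n, flipGain n (3 / 2) X j := by
  have := h.add_two_le
  rw [sum_eq_add_of_mem (2 * m) (2 * m + 1) (mem_range.2 (by omega)) (mem_range.2 (by omega))
    (by omega) fun j _ hj => ?_]
  · exact h.one_le_flipGain_add
  rcases lt_or_ge j (2 * m) with hlt | hge
  · exact h.flipGain_eq_zero_of_lt hlt _
  · exact h.flipGain_eq_zero_of_add_two_le (by omega) _

end IsCriticalBlock

lemma toNatFun_coe {n : ℕ} (x : Fin n → Bool) (i : Fin n) : toNatFun x i = x i := by
  simp [toNatFun]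

lemma toNatFun_update {n : ℕ} (x : Fin n → Bool) (i : Fin n) (b : Bool) :
    toNatFun (update x i b) = update (toNatFun x) i b := by
  funext j
  by_cases hj : j < n
  · simp [toNatFun, hj, update_apply, Fin.ext_iff]
  · simp [toNatFun, hj, show j ≠ i by omega]

lemma exists_toNatFun_eq_false {n : ℕ} {x : Fin n → Bool} (hx : x ≠ fun _ => true) :
    ∃ i, i < n ∧ toNatFun x i = false := by
  obtain ⟨i, hi⟩ := Function.ne_iff.1 hx
  exact ⟨i, i.isLt, by simpa [toNatFun_coe] using hi⟩

lemma HLB_step_sub_eq_flipGain {n : ℕ} (δ : ℝ) (x : Fin n → Bool) (i : Fin n) :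
    HLB δ (if Accepts (DLB x) (DLB (update x i (!x i))) then update x i (!x i) else x)
      - HLB δ x = flipGain n δ (toNatFun x) i := by
  rw [flipGain, ← toNatFun_coe x i, ← toNatFun_update]
  unfold DLB HLB
  split_ifs <;> simp

lemma PMF.sum_map_toReal_mul {α β : Type*} [Fintype α] [Fintype β] (p : PMF α) (f : α → β)
    (g : β → ℝ) : ∑ b, (p.map f b).toReal * g b = ∑ a, (p a).toReal * g (f a) := by
  classical
  have hmap : ∀ b, (p.map f b).toReal = ∑ a with f a = b, (p a).toReal := fun b => by
    rw [PMF.map_apply, tsum_fintype, sum_filter, ENNReal.toReal_sum fun a _ => by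
      split_ifs; exacts [p.apply_ne_top a, ENNReal.zero_ne_top]]
    simp_rw [eq_comm (a := b), apply_ite ENNReal.toReal, ENNReal.toReal_zero]
  simp_rw [hmap, sum_mul]
  rw [← sum_fiberwise univ f fun a => (p a).toReal * g (f a)]
  exact sum_congr rfl fun b _ => sum_congr rfl fun a ha => by rw [(mem_filter.1 ha).2]

/-- **One-step drift of the single-bit-flip non-elitist algorithm on DLB.** Let
`n` be an even positive integer. For every non-optimal `x ∈ {0,1}^n`, the
expected one-step gain in `HLB_{3/2}` of the single-bit-flip non-elitist
algorithm started at `x` is at least `1/n`. -/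
theorem single_bit_flip_one_step_drift (n : ℕ) [NeZero n] (he : Even n)
    (x : Fin n → Bool) (hx : x ≠ fun _ => true) :
    (1 : ℝ) / n ≤
      ∑ x' : Fin n → Bool, ((sbfStep n x) x').toReal *
        (HLB (3 / 2) x' - HLB (3 / 2) x) := by
  obtain ⟨m, hm⟩ := exists_isCriticalBlock he (exists_toNatFun_eq_false hx)
  rw [sbfStep, PMF.sum_map_toReal_mul]
  simp only [PMF.uniformOfFintype_apply, Fintype.card_fin, ENNReal.toReal_inv,
    ENNReal.toReal_natCast]
  simp_rw [HLB_step_sub_eq_flipGain]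
  rw [← mul_sum, Fin.sum_univ_eq_sum_range (flipGain n (3 / 2) (toNatFun x)), one_div]
  exact le_mul_of_one_le_right (by positivity) hm.one_le_sum_flipGain
end

section
/- Let n be an even positive integer and m an integer with n/4 < m < n/3. Let x ∈ {0,1}^n and let ℓ := |{j ∈ [1..2m+2] : x_j = 1}| be the number of ones among the first 2m+2 bits of x, and suppose 1 ≤ ℓ ≤ 2m+1. Then for every unary unbiased variation operator V, Pr[LO(V(x)) ≥ 2m+2] ≤ 2/n. -/
/-- A unary variation operator `V` (assigning to each bit string a distribution on
bit strings) is *unbiased* if it is invariant under XOR with any fixed string and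
under permutations of the bit positions. -/
def IsUnbiased {n : ℕ} (V : (Fin n → Bool) → PMF (Fin n → Bool)) : Prop :=
  (∀ x z y : Fin n → Bool,
      V x y = V (fun i => xor (x i) (z i)) (fun i => xor (y i) (z i))) ∧
  (∀ (x : Fin n → Bool) (σ : Equiv.Perm (Fin n)) (y : Fin n → Bool),
      V x y = V (x ∘ σ) (y ∘ σ))

/-!
An unbiased operator gives `y` a probability that depends only on the Hamming distance from `x`
to `y`. Let `A` be the first `a = 2m + 2` positions and `z` the number of zeros of `x` on `A`,
so `1 ≤ z < a`. A string with `LO y ≥ a` is all ones on `A`; overwriting it on `A` by `x`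
flipped on any `z`-subset of `A` keeps its distance from `x`, and different choices give
different strings. Hence `C(a, z) · Pr[LO(V x) ≥ a] ≤ 1`, and `C(a, z) ≥ a ≥ n / 2`.
-/

open Finset

theorem Nat.self_le_choose {a z : ℕ} (hz : 0 < z) (hza : z < a) : a ≤ a.choose z := by
  induction a generalizing z with
  | zero => omega
  | succ k ih =>
    obtain ⟨w, rfl⟩ := Nat.exists_eq_succ_of_ne_zero hz.ne'
    rw [Nat.choose_succ_succ']
    rcases Nat.eq_zero_or_pos w with rfl | hw
    · simp
    · have := ih hw (by omega)
      have := Nat.choose_pos (show w + 1 ≤ k by omega)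
      omega

theorem PMF.sum_toReal_eq_one {α : Type*} [Fintype α] (p : PMF α) : ∑ a, (p a).toReal = 1 := by
  have h := p.tsum_coe
  rw [tsum_fintype] at h
  rw [← ENNReal.toReal_sum fun a _ => p.apply_ne_top a, h, ENNReal.toReal_one]

theorem exists_perm_comp_eq_of_card_filter_eq {ι : Type*} [Fintype ι] {w w' : ι → Bool}
    (h : #{i | w i = true} = #{i | w' i = true}) : ∃ σ : Equiv.Perm ι, w' ∘ σ = w := by
  have hfib : ∀ b, Fintype.card {i // w i = b} = Fintype.card {i // w' i = b} := by
    have hsplit (v : ι → Bool) :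
        #{i | v i = true} + Fintype.card {i // v i = false} = Fintype.card ι := by
      simpa [Fintype.card_subtype] using card_filter_add_card_filter_not (s := univ) (v · = true)
    rintro (_ | _)
    · have := hsplit w; have := hsplit w'; omega
    · rwa [Fintype.card_subtype, Fintype.card_subtype]
  exact ⟨Equiv.ofFiberEquiv fun b => Fintype.equivOfCardEq (hfib b),
    funext (Equiv.ofFiberEquiv_map _)⟩

theorem IsUnbiased.apply_eq_of_hammingDist_eq {n : ℕ}
    {V : (Fin n → Bool) → PMF (Fin n → Bool)} (hV : IsUnbiased V) {x y y' : Fin n → Bool}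
    (h : hammingDist x y = hammingDist x y') : V x y = V x y' := by
  have hcard : #{i | xor (x i) (y i) = true} = #{i | xor (x i) (y' i) = true} := by
    simpa [hammingDist] using h
  obtain ⟨σ, hσ⟩ := exists_perm_comp_eq_of_card_filter_eq hcard
  calc V x y = V (fun _ => false) (fun i => xor (x i) (y i)) := by
        simpa [Bool.xor_comm] using hV.1 x x y
    _ = V (fun _ => false) (fun i => xor (x i) (y' i)) := by
      rw [← hσ]; exact (hV.2 (fun _ => false) σ _).symm
    _ = V x y' := by simpa [Bool.xor_comm] using (hV.1 x x y').symm

theorem le_LOn_iff {n a : ℕ} (ha : a ≤ n) (f : ℕ → Bool) :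
    a ≤ LOn n f ↔ ∀ s < a, f s = true := by
  unfold LOn
  constructor
  · intro h s hs
    by_contra hf
    have hsub : {r ∈ range n | ∀ t ≤ r, f t = true} ⊆ range s := fun r hr => by
      simp only [mem_filter, mem_range] at hr ⊢
      by_contra hrs
      exact hf (hr.2 s (by omega))
    have := card_le_card hsub
    rw [card_range] at this
    omega
  · intro h
    calc a = #(range a) := (card_range a).symm
      _ ≤ _ := card_le_card fun r hr => by
        simp only [mem_filter, mem_range] at hr ⊢
        exact ⟨by omega, fun t ht => h t (by omega)⟩

theorem le_LO_iff {n a : ℕ} (ha : a ≤ n) (y : Fin n → Bool) :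
    a ≤ LO y ↔ ∀ i : Fin n, (i : ℕ) < a → y i = true := by
  simp only [LO, le_LOn_iff ha, toNatFun]
  constructor
  · intro h i hi
    simpa using h i hi
  · intro h s hs
    rw [dif_pos (by omega)]
    exact h _ hs

section
variable {ι : Type*} [Fintype ι] [DecidableEq ι]

theorem hammingDist_piecewise (A : Finset ι) (x u y : ι → Bool) :
    hammingDist x (A.piecewise u y) = #{i ∈ A | x i ≠ u i} + #{i ∈ Aᶜ | x i ≠ y i} := by
  rw [hammingDist, ← card_filter_add_card_filter_not (· ∈ A), filter_filter, filter_filter]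
  congr 1 <;> congr 1 <;> ext i <;> by_cases hi : i ∈ A <;> simp [hi]

theorem choose_mul_sum_le_sum (x : ι → Bool) (A : Finset ι) {p : (ι → Bool) → ℝ}
    (hp0 : ∀ y, 0 ≤ p y) (hp : ∀ y y', hammingDist x y = hammingDist x y' → p y = p y') :
    (#A).choose #{i ∈ A | x i = false} * ∑ y with ∀ i ∈ A, y i = true, p y ≤
      ∑ y, p y := by
  set E : Finset (ι → Bool) := {y | ∀ i ∈ A, y i = true}
  set D := powersetCard #{i ∈ A | x i = false} A ×ˢ E
  set Φ : Finset ι × (ι → Bool) → (ι → Bool) := fun P =>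
    A.piecewise (fun i => xor (x i) (decide (i ∈ P.1))) P.2
  have hdist : ∀ P ∈ D, hammingDist x (Φ P) = hammingDist x P.2 := by
    rintro ⟨S, y⟩ hP
    simp only [D, E, mem_product, mem_powersetCard, mem_filter, mem_univ, true_and] at hP
    obtain ⟨⟨hSA, hS⟩, hy⟩ := hP
    have hy' : A.piecewise (fun _ => true) y = y := by
      ext i; by_cases hi : i ∈ A <;> simp [hi, hy]
    show hammingDist x (A.piecewise _ y) = hammingDist x y
    conv_rhs => rw [← hy']
    rw [hammingDist_piecewise, hammingDist_piecewise]
    congr 1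
    calc #{i ∈ A | x i ≠ xor (x i) (decide (i ∈ S))} = #S := by
          congr 1; ext i; by_cases hi : i ∈ S
          · simp [hi, hSA hi]
          · simp [hi]
      _ = #{i ∈ A | x i ≠ true} := by simp [hS]
  have hinj : Set.InjOn Φ D := by
    rintro ⟨S, y⟩ hP ⟨S', y'⟩ hP' heq
    simp only [D, E, mem_coe, mem_product, mem_powersetCard, mem_filter, mem_univ,
      true_and] at hP hP'
    have hpt := congrFun heq
    simp only [Φ] at hpt
    simp only [Prod.mk.injEq]
    refine ⟨Finset.ext fun i => ?_, funext fun i => ?_⟩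
    · by_cases hi : i ∈ A
      · simpa [hi] using hpt i
      · exact iff_of_false (fun h => hi (hP.1.1 h)) (fun h => hi (hP'.1.1 h))
    · by_cases hi : i ∈ A
      · rw [hP.2 i hi, hP'.2 i hi]
      · simpa [hi] using hpt i
  calc (#A).choose #{i ∈ A | x i = false} * ∑ y ∈ E, p y = ∑ P ∈ D, p P.2 := by
        simp only [D, sum_product, sum_const, card_powersetCard, nsmul_eq_mul]
    _ = ∑ P ∈ D, p (Φ P) := sum_congr rfl fun P hP => hp _ _ (hdist P hP).symm
    _ = ∑ w ∈ D.image Φ, p w := (sum_image hinj).symm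
    _ ≤ ∑ w, p w := sum_le_univ_sum_of_nonneg hp0
end

theorem prob_LO_improvement_le_general (n m : ℕ)
    (hm1 : n < 4 * m) (hm2 : 3 * m < n)
    (x : Fin n → Bool) (ℓ : ℕ)
    (hℓ : ℓ = ((Finset.univ : Finset (Fin n)).filter
      (fun j : Fin n => ((j : ℕ) < 2 * m + 2 ∧ x j = true))).card)
    (hℓ1 : 1 ≤ ℓ) (hℓ2 : ℓ ≤ 2 * m + 1)
    (V : (Fin n → Bool) → PMF (Fin n → Bool)) (hV : IsUnbiased V) :
    (∑ y : Fin n → Bool, if 2 * m + 2 ≤ LO y then ((V x) y).toReal else 0)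
      ≤ 2 / n := by
  set a := 2 * m + 2
  set A : Finset (Fin n) := {i | (i : ℕ) < a}
  have hA : #A = a := by
    rw [Fin.card_filter_val_lt]; omega
  have hZ : #{i ∈ A | x i = false} + ℓ = a := by
    rw [hℓ]
    conv_rhs => rw [← hA, ← card_filter_add_card_filter_not (s := A) (x · = false)]
    simp only [A, filter_filter, Bool.not_eq_false]
  set P := ∑ y with ∀ i ∈ A, y i = true, (V x y).toReal with hP_def
  have hevent : (∑ y, if a ≤ LO y then (V x y).toReal else 0) = P := by
    rw [hP_def, sum_filter]
    refine sum_congr rfl fun y _ => if_congr ?_ rfl rfl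
    simp [A, le_LO_iff (show a ≤ n by omega)]
  have hP : a * P ≤ 1 := by
    have key := choose_mul_sum_le_sum (p := fun y => (V x y).toReal) x A
      (fun _ => ENNReal.toReal_nonneg) fun _ _ h => by rw [hV.apply_eq_of_hammingDist_eq h]
    rw [(V x).sum_toReal_eq_one] at key
    calc _ ≤ (#A).choose #{i ∈ A | x i = false} * P := by
          gcongr
          rw [hA]; exact Nat.self_le_choose (by omega) (by omega)
      -- `key`'s filter is decided by the generic instance, this one by `Nat.decidableForallFin`
      _ ≤ 1 := by convert key using 4
  have hn : (n : ℝ) ≤ 2 * a := by exact_mod_cast (show n ≤ 2 * a by omega)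
  rw [hevent, le_div_iff₀ (by exact_mod_cast (show 0 < n by omega))]
  linarith [mul_le_mul_of_nonneg_left hn (sum_nonneg fun _ _ => ENNReal.toReal_nonneg : 0 ≤ P)]

/-- **Improvement probability bound for LeadingOnes under unary unbiased
variation.** Let `n` be even and positive and `m` an integer with
`n/4 < m < n/3`. Let `x ∈ {0,1}^n` and let `ℓ` be the number of ones among the
first `2m+2` bits of `x`, and suppose `1 ≤ ℓ ≤ 2m+1`. Then for every unary
unbiased variation operator `V`, `Pr[LO(V(x)) ≥ 2m+2] ≤ 2/n`. -/
theorem prob_LO_improvement_le (n m : ℕ) (hn : 0 < n) (he : Even n)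
    (hm1 : n < 4 * m) (hm2 : 3 * m < n)
    (x : Fin n → Bool) (ℓ : ℕ)
    (hℓ : ℓ = ((Finset.univ : Finset (Fin n)).filter
      (fun j : Fin n => ((j : ℕ) < 2 * m + 2 ∧ x j = true))).card)
    (hℓ1 : 1 ≤ ℓ) (hℓ2 : ℓ ≤ 2 * m + 1)
    (V : (Fin n → Bool) → PMF (Fin n → Bool)) (hV : IsUnbiased V) :
    (∑ y : Fin n → Bool, if 2 * m + 2 ≤ LO y then ((V x) y).toReal else 0)
      ≤ 2 / n :=
  prob_LO_improvement_le_general n m hm1 hm2 x ℓ hℓ hℓ1 hℓ2 V hV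
end
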